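/- arXiv:1509.00172 — 2 statements merged into one kernel-verified Lean document; each statement's English description precedes it below -/
import Mathlib

section
/- Let $\pi$ and $\hat\pi_c$ be strictly positive functions on a measurable space $\Theta$ and $q(\cdot|\cdot)$ a strictly positive proposal density. Define the stage-one acceptance probability $\tilde\alpha_1(\theta,\theta^*) = \min\{1, \hat\pi_c(\theta^*)q(\theta|\theta^*)/(\hat\pi_c(\theta)q(\theta^*|\theta))\}$ and the stage-two acceptance probability $\tilde\alpha_2(\theta,\theta^*) = \min\{1, \pi(\theta^*)\hat\pi_c(\theta)/(\pi(\theta)\hat\pi_c(\theta^*))\}$. Then the overall acceptance probability $\alpha(\theta,\theta^*) = \tilde\alpha_1(\theta,\theta^*)\tilde\alpha_2(\theta,\theta^*)$ satisfies detailed balance with respect to $\pi$: for all $\theta,\theta^*$, $\pi(\theta)q(\theta^*|\theta)\alpha(\theta,\theta^*) = \pi(\theta^*)q(\theta|\theta^*)\alpha(\theta^*,\theta)$. -/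
lemma min_one_div_eq {a b : ℝ} (ha : 0 < a) : min 1 (b / a) = min a b / a := by
  rw [← min_div_div_right ha.le, div_self ha.ne']

/-- Delayed-acceptance Metropolis-Hastings: the product of the stage-one and
stage-two acceptance probabilities satisfies detailed balance with respect to `π`. -/
theorem stmt_4 {Θ : Type*} (π πc : Θ → ℝ) (q : Θ → Θ → ℝ)
    (hπ : ∀ θ, 0 < π θ) (hπc : ∀ θ, 0 < πc θ) (hq : ∀ θ θ', 0 < q θ θ')
    (α₁ α₂ α : Θ → Θ → ℝ)
    (hα₁ : ∀ θ θs, α₁ θ θs = min 1 (πc θs * q θs θ / (πc θ * q θ θs)))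
    (hα₂ : ∀ θ θs, α₂ θ θs = min 1 (π θs * πc θ / (π θ * πc θs)))
    (hα : ∀ θ θs, α θ θs = α₁ θ θs * α₂ θ θs) :
    ∀ θ θs, π θ * q θ θs * α θ θs = π θs * q θs θ * α θs θ := by
  intro θ θs
  rw [hα, hα, hα₁, hα₁, hα₂, hα₂,
    min_one_div_eq (mul_pos (hπc θ) (hq θ θs)),
    min_one_div_eq (mul_pos (hπc θs) (hq θs θ)),
    min_one_div_eq (mul_pos (hπ θ) (hπc θs)),
    min_one_div_eq (mul_pos (hπ θs) (hπc θ)),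
    min_comm (πc θs * q θs θ) (πc θ * q θ θs),
    min_comm (π θs * πc θ) (π θ * πc θs)]
  have aux : ∀ x y u v m n : ℝ, x ≠ 0 → y ≠ 0 → u ≠ 0 → v ≠ 0 →
      x * y * (m / (u * y) * (n / (x * v))) = m * n / (u * v) := by
    intro x y u v m n hx hy hu hv
    field_simp
  rw [aux _ _ _ _ _ _ (hπ θ).ne' (hq θ θs).ne' (hπc θ).ne' (hπc θs).ne',
    aux _ _ _ _ _ _ (hπ θs).ne' (hq θs θ).ne' (hπc θs).ne' (hπc θ).ne',
    mul_comm (πc θ) (πc θs)]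
end

section
/- Under Assumptions 1 and 2 (minorisation for the ideal MH kernel with constant $\delta$ and density $\nu$, and weights bounded above by $\overline{w}$ with $\mathbb{E}[W]=c\le\overline{w}$), the pseudo-marginal kernel $\tilde P$ on $\Theta\times[0,\overline{w}]$ with acceptance probability $\alpha_{PM}$ satisfies the whole-space minorisation $\tilde P([\theta,w],\cdot) \ge \tilde\delta\,\tilde\nu(\cdot)$ with $\tilde\delta = c\delta/\overline{w} \le \delta < 1$, where $\tilde\nu$ has density $\tilde\nu(\theta,w) = \nu(\theta)\,c^{-1}q_\theta(w)w$. -/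
/-!
Because the current and proposed weights both lie in `(0, w̄]`, the pseudo-marginal acceptance
probability dominates `(w*/w̄) α_MH`. Hence the accepted part of `P̃` has density at least
`(w*/w̄) q(θ*|θ) q_{θ*}(w*) α_MH ≥ (δ/w̄) ν(θ*) q_{θ*}(w*) w* = (cδ/w̄) ν̃(θ*, w*)`, while the
rejection part is nonnegative since `α_PM ≤ 1` and the proposal is a probability density.
Finally `c ≤ w̄`, being the mean of a weight supported in `(0, w̄]`.
-/

open MeasureTheory

lemma mul_min_one_le_min_one_mul {t r : ℝ} (ht₀ : 0 ≤ t) (ht₁ : t ≤ 1) :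
    t * min 1 r ≤ min 1 (t * r) := by
  rw [mul_min_of_nonneg _ _ ht₀, mul_one]
  exact min_le_min_right _ ht₁

lemma div_mul_min_one_le_min_one_mul_div {r w w' v : ℝ} (hr : 0 ≤ r) (hw : 0 < w) (hww' : w ≤ w')
    (hv₀ : 0 ≤ v) (hvw' : v ≤ w') :
    v / w' * min 1 r ≤ min 1 (r * (v / w)) :=
  calc v / w' * min 1 r ≤ min 1 (v / w' * r) :=
        mul_min_one_le_min_one_mul (div_nonneg hv₀ (hw.le.trans hww'))
          (div_le_one_of_le₀ hvw' (hw.le.trans hww'))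
    _ ≤ min 1 (r * (v / w)) := by
        rw [mul_comm]
        gcongr

lemma integral_mul_le_of_support_subset_Iic {μ : Measure ℝ} {f : ℝ → ℝ} {b : ℝ}
    (hf₀ : ∀ x, 0 ≤ f x) (hsupp : Function.support f ⊆ Set.Iic b) (hf₁ : ∫ x, f x ∂μ = 1)
    (hmean : Integrable (fun x => x * f x) μ) :
    ∫ x, x * f x ∂μ ≤ b :=
  calc ∫ x, x * f x ∂μ ≤ ∫ x, b * f x ∂μ := by
        refine integral_mono hmean ((Integrable.of_integral_ne_zero ?_).const_mul b) fun x => ?_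
        · simp [hf₁]
        by_cases hx : f x = 0
        · simp [hx]
        · exact mul_le_mul_of_nonneg_right (hsupp hx) (hf₀ x)
    _ = b := by rw [integral_const_mul, hf₁, mul_one]

lemma integral_integral_le_of_le_mul {α β : Type*} [MeasurableSpace α] [MeasurableSpace β]
    {μ : Measure α} {ν : Measure β} [SFinite μ] [SFinite ν] {F h : α → β → ℝ} {g : α → ℝ}
    (hF : Integrable (fun p : α × β => F p.1 p.2) (μ.prod ν)) (hg : Integrable g μ)
    (hh : ∀ x, ∫ y, h x y ∂ν = 1) (hle : ∀ x y, F x y ≤ g x * h x y) :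
    ∫ x, ∫ y, F x y ∂ν ∂μ ≤ ∫ x, g x ∂μ := by
  refine integral_mono_ae hF.integral_prod_left hg ?_
  filter_upwards [hF.prod_right_ae] with x hFx
  calc ∫ y, F x y ∂ν ≤ ∫ y, g x * h x y ∂ν :=
        integral_mono hFx ((Integrable.of_integral_ne_zero (by simp [hh x])).const_mul _) (hle x)
    _ = g x := by rw [integral_const_mul, hh, mul_one]

lemma integral_mono_of_nonneg_right {α : Type*} [MeasurableSpace α] {μ : Measure α}
    {f g : α → ℝ} (hg : Integrable g μ) (hg₀ : ∀ x, 0 ≤ g x) (hfg : ∀ x, f x ≤ g x) :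
    ∫ x, f x ∂μ ≤ ∫ x, g x ∂μ := by
  by_cases hf : Integrable f μ
  · exact integral_mono hf hg hfg
  · rw [integral_undef hf]
    exact integral_nonneg hg₀

section PseudoMarginal

variable {Θ : Type*} {π : Θ → ℝ} {q : Θ → Θ → ℝ} {qw : Θ → ℝ → ℝ} {νd : Θ → ℝ}
  {αMH : Θ → Θ → ℝ} {αPM : Θ → ℝ → Θ → ℝ → ℝ} {δ wbar : ℝ} {θ θs : Θ} {w ws : ℝ}

lemma pseudoMarginal_acceptance_nonneg (hπ : ∀ θ, 0 < π θ) (hq : ∀ θ θs, 0 < q θ θs)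
    (hαPM : ∀ θ w θs ws, αPM θ w θs ws = min 1 (π θs * q θs θ * ws / (π θ * q θ θs * w)))
    (hw : 0 < w) (hws : 0 ≤ ws) :
    0 ≤ αPM θ w θs ws := by
  rw [hαPM]
  have := hπ θ; have := hπ θs; have := hq θ θs; have := hq θs θ
  exact le_min zero_le_one (by positivity)

lemma pseudoMarginal_acceptance_ge (hπ : ∀ θ, 0 < π θ) (hq : ∀ θ θs, 0 < q θ θs)
    (hαMH : ∀ θ θs, αMH θ θs = min 1 (π θs * q θs θ / (π θ * q θ θs)))
    (hαPM : ∀ θ w θs ws, αPM θ w θs ws = min 1 (π θs * q θs θ * ws / (π θ * q θ θs * w)))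
    (hw : w ∈ Set.Ioc 0 wbar) (hws : ws ∈ Set.Ioc 0 wbar) :
    ws / wbar * αMH θ θs ≤ αPM θ w θs ws := by
  rw [hαMH, hαPM, mul_div_mul_comm _ ws]
  exact div_mul_min_one_le_min_one_mul_div
    (div_nonneg (mul_pos (hπ θs) (hq θs θ)).le (mul_pos (hπ θ) (hq θ θs)).le)
    hw.1 hw.2 hws.1.le hws.2

lemma pseudoMarginal_integrand_nonneg (hπ : ∀ θ, 0 < π θ) (hq : ∀ θ θs, 0 < q θ θs)
    (hqw₀ : ∀ θ w, 0 ≤ qw θ w) (hqwsupp : ∀ θ w, w ∉ Set.Ioc 0 wbar → qw θ w = 0)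
    (hαPM : ∀ θ w θs ws, αPM θ w θs ws = min 1 (π θs * q θs θ * ws / (π θ * q θ θs * w)))
    (hw : 0 < w) :
    0 ≤ q θ θs * qw θs ws * αPM θ w θs ws := by
  by_cases hws : ws ∈ Set.Ioc 0 wbar
  · exact mul_nonneg (mul_nonneg (hq θ θs).le (hqw₀ θs ws))
      (pseudoMarginal_acceptance_nonneg hπ hq hαPM hw hws.1.le)
  · simp [hqwsupp θs ws hws]

lemma pseudoMarginal_integrand_ge (hπ : ∀ θ, 0 < π θ) (hq : ∀ θ θs, 0 < q θ θs)
    (hqw₀ : ∀ θ w, 0 ≤ qw θ w) (hqwsupp : ∀ θ w, w ∉ Set.Ioc 0 wbar → qw θ w = 0)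
    (hαMH : ∀ θ θs, αMH θ θs = min 1 (π θs * q θs θ / (π θ * q θ θs)))
    (hminor : ∀ θ θs, δ * νd θs ≤ q θ θs * αMH θ θs)
    (hαPM : ∀ θ w θs ws, αPM θ w θs ws = min 1 (π θs * q θs θ * ws / (π θ * q θ θs * w)))
    (hw : w ∈ Set.Ioc 0 wbar) :
    δ / wbar * (νd θs * qw θs ws * ws) ≤ q θ θs * qw θs ws * αPM θ w θs ws := by
  by_cases hws : ws ∈ Set.Ioc 0 wbar
  · have hws_div : 0 ≤ ws / wbar := div_nonneg hws.1.le (hws.1.le.trans hws.2)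
    calc δ / wbar * (νd θs * qw θs ws * ws) = ws / wbar * (δ * νd θs) * qw θs ws := by ring
      _ ≤ ws / wbar * (q θ θs * αMH θ θs) * qw θs ws := by
          gcongr _ * ?_ * _
          · exact hqw₀ θs ws
          · exact hminor θ θs
      _ = q θ θs * (ws / wbar * αMH θ θs) * qw θs ws := by ring
      _ ≤ q θ θs * αPM θ w θs ws * qw θs ws := by
          gcongr q θ θs * ?_ * _
          · exact hqw₀ θs ws
          · exact (hq θ θs).le
          · exact pseudoMarginal_acceptance_ge hπ hq hαMH hαPM hw hws
      _ = q θ θs * qw θs ws * αPM θ w θs ws := by ring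
  · simp [hqwsupp θs ws hws]

end PseudoMarginal

theorem stmt_11_general {Θ : Type*} [MeasurableSpace Θ] (lam : Measure Θ) [SigmaFinite lam]
    (π : Θ → ℝ) (q : Θ → Θ → ℝ) (qw : Θ → ℝ → ℝ) (νd : Θ → ℝ)
    (c wbar δ : ℝ) (hc : 0 < c) (hwbar : 0 < wbar) (hδ : δ ∈ Set.Ioo (0 : ℝ) 1)
    (hπ : ∀ θ, 0 < π θ) (hqpos : ∀ θ θs, 0 < q θ θs)
    (hq1 : ∀ θ, ∫ θs, q θ θs ∂lam = 1)
    (hqw0 : ∀ θ w, 0 ≤ qw θ w)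
    (hqwsupp : ∀ θ w, w ∉ Set.Ioc (0 : ℝ) wbar → qw θ w = 0)
    (hqw1 : ∀ θ, ∫ w, qw θ w = 1)
    (hqwmean : ∀ θ, ∫ w, w * qw θ w = c)
    (hν1 : ∫ θs, νd θs ∂lam = 1)
    -- the ideal MH acceptance probability and Assumption 1
    (αMH : Θ → Θ → ℝ)
    (hαMH : ∀ θ θs, αMH θ θs = min 1 (π θs * q θs θ / (π θ * q θ θs)))
    (hminor : ∀ θ θs, δ * νd θs ≤ q θ θs * αMH θ θs)
    -- the pseudo-marginal acceptance probability
    (αPM : Θ → ℝ → Θ → ℝ → ℝ)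
    (hαPM : ∀ θ w θs ws, αPM θ w θs ws =
      min 1 (π θs * q θs θ * ws / (π θ * q θ θs * w)))
    -- the pseudo-marginal kernel
    (αbar : Θ → ℝ → ℝ)
    (hαbar : ∀ θ w, αbar θ w = ∫ θs, (∫ ws, q θ θs * qw θs ws * αPM θ w θs ws) ∂lam)
    (Pt : Θ × ℝ → Set (Θ × ℝ) → ℝ)
    (hPt : ∀ p A, Pt p A =
      (1 - αbar p.1 p.2) * Set.indicator A (fun _ => (1 : ℝ)) p +
        ∫ r in A, q p.1 r.1 * qw r.1 r.2 * αPM p.1 p.2 r.1 r.2 ∂(lam.prod volume))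
    (hint : ∀ θ w, Integrable
      (fun r : Θ × ℝ => q θ r.1 * qw r.1 r.2 * αPM θ w r.1 r.2) (lam.prod volume))
    (νt : Θ × ℝ → ℝ) (hνt : ∀ r, νt r = νd r.1 * c⁻¹ * qw r.1 r.2 * r.2) :
    c * δ / wbar ≤ δ ∧
    ∀ θ : Θ, ∀ w : ℝ, w ∈ Set.Ioc 0 wbar → ∀ A : Set (Θ × ℝ), MeasurableSet A →
      (c * δ / wbar) * ∫ r in A, νt r ∂(lam.prod volume) ≤ Pt (θ, w) A := by
  have hsupp : ∀ θ, Function.support (qw θ) ⊆ Set.Ioc 0 wbar :=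
    fun θ w hw => not_imp_comm.1 (hqwsupp θ w) hw
  obtain ⟨θ₀, -⟩ :=
    exists_ne_zero_of_integral_ne_zero (hν1 ▸ one_ne_zero : ∫ θs, νd θs ∂lam ≠ 0)
  have hcw : c ≤ wbar := hqwmean θ₀ ▸ integral_mul_le_of_support_subset_Iic (hqw0 θ₀)
    ((hsupp θ₀).trans Set.Ioc_subset_Iic_self) (hqw1 θ₀)
    (.of_integral_ne_zero (by rw [hqwmean]; exact hc.ne'))
  refine ⟨(div_le_iff₀ hwbar).2 (by rw [mul_comm δ]; exact mul_le_mul_of_nonneg_right hcw hδ.1.le),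
    fun θ w hw A hA => ?_⟩
  have hle_proposal :
      ∀ θs ws, q θ θs * qw θs ws * αPM θ w θs ws ≤ q θ θs * qw θs ws := fun θs ws =>
    mul_le_of_le_one_right (mul_nonneg (hqpos θ θs).le (hqw0 θs ws))
      ((hαPM θ w θs ws).trans_le (min_le_left _ _))
  have hminor_pointwise :
      ∀ r, c * δ / wbar * νt r ≤ q θ r.1 * qw r.1 r.2 * αPM θ w r.1 r.2 := fun r => by
    have : c * δ / wbar * νt r = δ / wbar * (νd r.1 * qw r.1 r.2 * r.2) := by
      rw [hνt]; field_simp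
    exact this.trans_le (pseudoMarginal_integrand_ge hπ hqpos hqw0 hqwsupp hαMH hminor hαPM hw)
  have hαbar₁ : αbar θ w ≤ 1 := by
    simpa only [hαbar, hq1] using integral_integral_le_of_le_mul (hint θ w)
      (.of_integral_ne_zero (by rw [hq1]; exact one_ne_zero)) hqw1 hle_proposal
  calc c * δ / wbar * ∫ r in A, νt r ∂(lam.prod volume)
      = ∫ r in A, c * δ / wbar * νt r ∂(lam.prod volume) := (integral_const_mul _ _).symm
    _ ≤ ∫ r in A, q θ r.1 * qw r.1 r.2 * αPM θ w r.1 r.2 ∂(lam.prod volume) :=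
        integral_mono_of_nonneg_right (hint θ w).restrict
          (fun _ => pseudoMarginal_integrand_nonneg hπ hqpos hqw0 hqwsupp hαPM hw.1)
          hminor_pointwise
    _ ≤ Pt (θ, w) A := by
        rw [hPt]
        exact le_add_of_nonneg_left (mul_nonneg (sub_nonneg.2 hαbar₁)
          (Set.indicator_nonneg (fun _ _ => zero_le_one) _))

/-- Minorisation of the pseudo-marginal delayed-acceptance fixed kernel: under
the minorisation Assumption 1 for the ideal MH kernel and bounded weights with
mean `c ≤ w̄` (Assumption 2), the pseudo-marginal kernel `P̃` on `Θ × (0, w̄]`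
satisfies the whole-space minorisation `P̃((θ,w),·) ≥ δ̃ ν̃(·)` with
`δ̃ = cδ/w̄ ≤ δ < 1`, where `ν̃(θ,w) = ν(θ) c⁻¹ q_θ(w) w`. -/
theorem stmt_11 {Θ : Type*} [MeasurableSpace Θ] (lam : Measure Θ) [SigmaFinite lam]
    (π : Θ → ℝ) (q : Θ → Θ → ℝ) (qw : Θ → ℝ → ℝ) (νd : Θ → ℝ)
    (c wbar δ : ℝ) (hc : 0 < c) (hwbar : 0 < wbar) (hδ : δ ∈ Set.Ioo (0 : ℝ) 1)
    (hπ : ∀ θ, 0 < π θ) (hqpos : ∀ θ θs, 0 < q θ θs)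
    (hq1 : ∀ θ, ∫ θs, q θ θs ∂lam = 1)
    (hqw0 : ∀ θ w, 0 ≤ qw θ w)
    (hqwsupp : ∀ θ w, w ∉ Set.Ioc (0 : ℝ) wbar → qw θ w = 0)
    (hqw1 : ∀ θ, ∫ w, qw θ w = 1)
    (hqwmean : ∀ θ, ∫ w, w * qw θ w = c)
    (hν0 : ∀ θs, 0 ≤ νd θs) (hν1 : ∫ θs, νd θs ∂lam = 1)
    -- the ideal MH acceptance probability and Assumption 1
    (αMH : Θ → Θ → ℝ)
    (hαMH : ∀ θ θs, αMH θ θs = min 1 (π θs * q θs θ / (π θ * q θ θs)))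
    (hminor : ∀ θ θs, δ * νd θs ≤ q θ θs * αMH θ θs)
    -- the pseudo-marginal acceptance probability
    (αPM : Θ → ℝ → Θ → ℝ → ℝ)
    (hαPM : ∀ θ w θs ws, αPM θ w θs ws =
      min 1 (π θs * q θs θ * ws / (π θ * q θ θs * w)))
    -- the pseudo-marginal kernel
    (αbar : Θ → ℝ → ℝ)
    (hαbar : ∀ θ w, αbar θ w = ∫ θs, (∫ ws, q θ θs * qw θs ws * αPM θ w θs ws) ∂lam)
    (Pt : Θ × ℝ → Set (Θ × ℝ) → ℝ)
    (hPt : ∀ p A, Pt p A =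
      (1 - αbar p.1 p.2) * Set.indicator A (fun _ => (1 : ℝ)) p +
        ∫ r in A, q p.1 r.1 * qw r.1 r.2 * αPM p.1 p.2 r.1 r.2 ∂(lam.prod volume))
    (hint : ∀ θ w, Integrable
      (fun r : Θ × ℝ => q θ r.1 * qw r.1 r.2 * αPM θ w r.1 r.2) (lam.prod volume))
    (νt : Θ × ℝ → ℝ) (hνt : ∀ r, νt r = νd r.1 * c⁻¹ * qw r.1 r.2 * r.2) :
    c * δ / wbar ≤ δ ∧
    ∀ θ : Θ, ∀ w : ℝ, w ∈ Set.Ioc 0 wbar → ∀ A : Set (Θ × ℝ), MeasurableSet A →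
      (c * δ / wbar) * ∫ r in A, νt r ∂(lam.prod volume) ≤ Pt (θ, w) A :=
  stmt_11_general lam π q qw νd c wbar δ hc hwbar hδ hπ hqpos hq1 hqw0 hqwsupp hqw1 hqwmean hν1 αMH
    hαMH hminor αPM hαPM αbar hαbar Pt hPt hint νt hνt
end
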